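/- Under the recursive right-spinor representation Fₙ : Cl(n,n) → M_{2ⁿ}(K), the matrix Fₙ(ẽ_k) is antisymmetric (Fₙ(ẽ_k)ᵀ = −Fₙ(ẽ_k)) for every 0 ≤ k < n. -/
import Mathlib


open Matrix

/-- The quadratic form of signature `(n, n)` on `(Fin n → K) × (Fin n → K)`. -/
noncomputable def Qnn (K : Type*) [Field K] (n : ℕ) :
    QuadraticForm K ((Fin n → K) × (Fin n → K)) :=
  (QuadraticMap.weightedSumSquares K (fun _ : Fin n => (1 : K))).prod
    (QuadraticMap.weightedSumSquares K (fun _ : Fin n => (-1 : K)))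

/-- The generator `eₖ` of `Cl(n,n)` (squares to `1`). -/
noncomputable def eGen (K : Type*) [Field K] (n : ℕ) (k : Fin n) :
    CliffordAlgebra (Qnn K n) :=
  CliffordAlgebra.ι (Qnn K n) (Pi.single k 1, 0)

/-- The generator `ẽₖ` of `Cl(n,n)` (squares to `-1`). -/
noncomputable def fGen (K : Type*) [Field K] (n : ℕ) (k : Fin n) :
    CliffordAlgebra (Qnn K n) :=
  CliffordAlgebra.ι (Qnn K n) (0, Pi.single k 1)

theorem stmt12 {K : Type*} [Field K] (hK : (2 : K) ≠ 0)
    (incl : ∀ m : ℕ, CliffordAlgebra (Qnn K m) →ₐ[K] CliffordAlgebra (Qnn K (m + 1)))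
    (hincl : ∀ (m : ℕ) (v : (Fin m → K) × (Fin m → K)),
      incl m (CliffordAlgebra.ι (Qnn K m) v) =
        CliffordAlgebra.ι (Qnn K (m + 1)) (Fin.snoc v.1 0, Fin.snoc v.2 0))
    (F : ∀ m : ℕ, CliffordAlgebra (Qnn K m) →ₐ[K] Matrix (Fin (2 ^ m)) (Fin (2 ^ m)) K)
    (hF0 : ∀ x : K, F 0 (algebraMap K _ x) = algebraMap K _ x)
    (hrec : ∀ (m : ℕ) (A00 A01 A10 A11 : CliffordAlgebra (Qnn K m)),
      F (m + 1) (incl m A00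
          + eGen K (m + 1) (Fin.last m) * incl m A01
          + fGen K (m + 1) (Fin.last m) * incl m A10
          + fGen K (m + 1) (Fin.last m) * eGen K (m + 1) (Fin.last m) * incl m A11) =
        (Matrix.reindex (finSumFinEquiv.trans (finCongr (by rw [pow_succ, mul_two])))
            (finSumFinEquiv.trans (finCongr (by rw [pow_succ, mul_two]))))
          (Matrix.fromBlocks
            (F m (A00 + A11)) (F m (CliffordAlgebra.involute (A01 + A10)))
            (F m (A01 - A10)) (F m (CliffordAlgebra.involute (A00 - A11)))))
    (n : ℕ) (k : Fin n) :
    (F n (fGen K n k))ᵀ = -(F n (fGen K n k)) := by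
  induction n with
  | zero => exact k.elim0
  | succ n ih =>
    induction k using Fin.lastCases with
    | last =>
      have h := hrec n 0 0 1 0
      simp only [map_zero, _root_.map_one, mul_zero, mul_one, add_zero, zero_add,
        sub_zero, zero_sub, map_neg] at h
      rw [h, transpose_reindex, fromBlocks_transpose]
      simp only [reindex_apply, transpose_zero, transpose_neg, transpose_one]
      rw [show fromBlocks (0 : Matrix (Fin (2^n)) (Fin (2^n)) K) (-1) 1 0
          = -(fromBlocks 0 1 (-1) 0) by simp [Matrix.fromBlocks_neg],
        Matrix.submatrix_neg]
      rfl
    | cast j =>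
      have key : fGen K (n+1) j.castSucc = incl n (fGen K n j) := by
        rw [fGen, fGen, hincl]
        congr 1
        refine Prod.ext ?_ ?_
        · ext i
          induction i using Fin.lastCases <;> simp
        · ext i
          induction i using Fin.lastCases with
          | last => simp [Pi.single_apply, (Fin.castSucc_lt_last j).ne]
          | cast i =>
            simp [Pi.single_apply, Fin.castSucc_inj]
      have hinv : CliffordAlgebra.involute (fGen K n j) = -(fGen K n j) := by
        rw [fGen, CliffordAlgebra.involute_ι]
      have h := hrec n (fGen K n j) 0 0 0
      simp only [map_zero, mul_zero, add_zero, zero_add, sub_zero, zero_sub, hinv,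
        map_neg] at h
      rw [key, h, transpose_reindex, fromBlocks_transpose]
      simp only [transpose_zero, transpose_neg, ih j, neg_neg, reindex_apply]
      rw [show fromBlocks (-(F n) (fGen K n j)) 0 0 ((F n) (fGen K n j))
          = -(fromBlocks ((F n) (fGen K n j)) 0 0 (-(F n) (fGen K n j))) by
            simp [Matrix.fromBlocks_neg],
        Matrix.submatrix_neg]
      rfl
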